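/- Let p_{(i,i')} ≥ 0 for (i,i') ∈ {0,1}² with Σ_{(i,i')} p_{(i,i')} = 1, and let κ_{(i,i')} be density matrices on ℂ^m. For each (x₀,x₁) ∈ {0,1}² define the density matrix ρ_{(x₀,x₁)} = Σ_{(i,i')∈{0,1}²} p_{(i,i')}·(I₂/2) ⊗ |x_{i⊕i'} ⊕ i'⟩⟨x_{i⊕i'} ⊕ i'| ⊗ κ_{(i,i')} on ℂ²⊗ℂ²⊗ℂ^m. Then for every POVM (M_{(x₀,x₁)})_{(x₀,x₁)∈{0,1}²} on ℂ²⊗ℂ²⊗ℂ^m, the average success probability satisfies (1/4)·Σ_{(x₀,x₁)∈{0,1}²} Tr(M_{(x₀,x₁)} ρ_{(x₀,x₁)}) ≤ 1/2. -/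

import Mathlib

open Matrix Kronecker ComplexOrder

/-- The old Mathlib `Matrix.PosSemidef.sqrt` (removed upstream), restored with its old definition. -/
noncomputable def Matrix.PosSemidef.sqrt {n 𝕜 : Type*} [Fintype n] [DecidableEq n] [RCLike 𝕜]
    {A : Matrix n n 𝕜} (hA : A.PosSemidef) : Matrix n n 𝕜 :=
  hA.1.eigenvectorUnitary.1 * diagonal ((↑) ∘ (√·) ∘ hA.1.eigenvalues) *
    (star hA.1.eigenvectorUnitary : Matrix n n 𝕜)

/-- The trace norm `‖A‖₁ = Tr √(Aᴴ A)` of a complex matrix. -/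
noncomputable def traceNorm {n : Type*} [Fintype n] [DecidableEq n] (A : Matrix n n ℂ) : ℝ :=
  ((Matrix.posSemidef_conjTranspose_mul_self A).sqrt.trace).re

/-- The trace distance `Δ(ρ,σ) = ‖ρ - σ‖₁ / 2`. -/
noncomputable def traceDist {n : Type*} [Fintype n] [DecidableEq n] (ρ σ : Matrix n n ℂ) : ℝ :=
  traceNorm (ρ - σ) / 2

open scoped Classical in
/-- Positive semidefinite square root (junk value `0` on non-PSD matrices). -/
noncomputable def psdSqrt {n : Type*} [Fintype n] [DecidableEq n] (A : Matrix n n ℂ) :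
    Matrix n n ℂ :=
  if h : A.PosSemidef then h.sqrt else 0

/-- The fidelity `F(ρ,σ) = ‖√ρ √σ‖₁`. -/
noncomputable def fidelity {n : Type*} [Fintype n] [DecidableEq n] (ρ σ : Matrix n n ℂ) : ℝ :=
  traceNorm (psdSqrt ρ * psdSqrt σ)

/-- A density matrix: positive semidefinite with trace 1. -/
def IsDensityMatrix {n : Type*} [Fintype n] [DecidableEq n] (ρ : Matrix n n ℂ) : Prop :=
  ρ.PosSemidef ∧ ρ.trace = 1

/-- The projector `|b⟩⟨b|` on ℂ². -/
noncomputable def proj (b : Bool) : Matrix Bool Bool ℂ := Matrix.single b b 1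

/-- The strong oblivious transfer channel `F_{(x₀,x₁)}`. -/
noncomputable def sotChannel (x₀ x₁ : Bool) (ρ : Matrix (Bool × Bool) (Bool × Bool) ℂ) :
    Matrix (Bool × Bool) (Bool × Bool) ℂ :=
  ∑ i : Bool, ∑ i' : Bool,
    ρ (i, i') (i, i') •
      (((1/2 : ℂ) • (1 : Matrix Bool Bool ℂ)) ⊗ₖ proj (xor (bif xor i i' then x₁ else x₀) i'))

/-! Flipping both input bits flips the classical bit `x_{i⊕i'} ⊕ i'` of every summand, and
`|b⟩⟨b| + |¬b⟩⟨¬b| = I₂`, so `ρₓ + ρ_{x̄}` is the same matrix `σ` of trace `2` for every `x`.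
Hence `ρₓ ≤ σ` in the Loewner order, and for any POVM
`∑ₓ Tr(Mₓ ρₓ) ≤ ∑ₓ Tr(Mₓ σ) = Tr σ = 2`. -/

section POVM

variable {ι n : Type*} [Fintype ι] [Fintype n] [DecidableEq n]

lemma Matrix.PosSemidef.re_trace_mul_nonneg {A B : Matrix n n ℂ} (hA : A.PosSemidef)
    (hB : B.PosSemidef) : 0 ≤ (A * B).trace.re := by
  open scoped MatrixOrder in
  obtain ⟨C, rfl⟩ := CStarAlgebra.nonneg_iff_eq_star_mul_self.mp hA.nonneg
  rw [star_eq_conjTranspose, mul_assoc, trace_mul_comm]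
  exact (Complex.le_def.mp (hB.mul_mul_conjTranspose_same C).trace_nonneg).1

lemma sum_re_trace_mul_le_re_trace {M ρ : ι → Matrix n n ℂ} {σ : Matrix n n ℂ}
    (hM : ∀ x, (M x).PosSemidef) (hMsum : ∑ x, M x = 1) (hρσ : ∀ x, (σ - ρ x).PosSemidef) :
    ∑ x, (M x * ρ x).trace.re ≤ σ.trace.re :=
  calc ∑ x, (M x * ρ x).trace.re
      ≤ ∑ x, (M x * σ).trace.re := Finset.sum_le_sum fun x _ => by
        have := (hM x).re_trace_mul_nonneg (hρσ x)
        rwa [mul_sub, trace_sub, Complex.sub_re, sub_nonneg] at this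
    _ = σ.trace.re := by
        rw [← Complex.re_sum, ← trace_sum, ← Finset.sum_mul, hMsum, one_mul]

end POVM

section DensityMatrix

variable {ι l n : Type*} [Fintype l] [DecidableEq l] [Fintype n] [DecidableEq n]

lemma IsDensityMatrix.kronecker {A : Matrix l l ℂ} {B : Matrix n n ℂ} (hA : IsDensityMatrix A)
    (hB : IsDensityMatrix B) : IsDensityMatrix (A ⊗ₖ B) :=
  ⟨hA.1.kronecker hB.1, by rw [trace_kronecker, hA.2, hB.2, mul_one]⟩

lemma IsDensityMatrix.sum_smul [Fintype ι] {p : ι → ℝ} (hp : ∀ a, 0 ≤ p a)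
    (hpsum : ∑ a, p a = 1) {ρ : ι → Matrix n n ℂ} (hρ : ∀ a, IsDensityMatrix (ρ a)) :
    IsDensityMatrix (∑ a, p a • ρ a) := by
  refine ⟨posSemidef_sum _ fun a _ => (hρ a).1.smul (hp a), ?_⟩
  simp only [trace_sum, trace_smul, (hρ _).2, Complex.real_smul, mul_one]
  exact_mod_cast hpsum

lemma isDensityMatrix_proj (b : Bool) : IsDensityMatrix (proj b) := by
  refine ⟨?_, trace_single_eq_same b 1⟩
  rw [proj, ← diagonal_single]
  exact .diagonal fun i => by rw [Pi.single_apply]; split_ifs <;> norm_num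

lemma isDensityMatrix_half_smul_one : IsDensityMatrix ((1/2 : ℂ) • (1 : Matrix Bool Bool ℂ)) := by
  refine ⟨?_, by simp [trace_one]⟩
  rw [smul_one_eq_diagonal]
  exact .diagonal fun _ => by positivity

lemma proj_add_proj_not (b : Bool) : proj b + proj (!b) = 1 := by
  ext i j
  cases b <;> cases i <;> cases j <;> simp [proj, one_apply]

end DensityMatrix

noncomputable def sotOutputState {n : Type*} (p : Bool × Bool → ℝ)
    (κ : Bool × Bool → Matrix n n ℂ) (x : Bool × Bool) :
    Matrix ((Bool × Bool) × n) ((Bool × Bool) × n) ℂ :=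
  ∑ a : Bool × Bool, p a •
    ((((1/2 : ℂ) • (1 : Matrix Bool Bool ℂ)) ⊗ₖ
        proj (xor (bif xor a.1 a.2 then x.2 else x.1) a.2)) ⊗ₖ κ a)

lemma isDensityMatrix_sotOutputState {n : Type*} [Fintype n] [DecidableEq n] {p : Bool × Bool → ℝ}
    (hp : ∀ a, 0 ≤ p a) (hpsum : ∑ a, p a = 1) {κ : Bool × Bool → Matrix n n ℂ}
    (hκ : ∀ a, IsDensityMatrix (κ a)) (x : Bool × Bool) :
    IsDensityMatrix (sotOutputState p κ x) :=
  .sum_smul hp hpsum fun a =>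
    (isDensityMatrix_half_smul_one.kronecker (isDensityMatrix_proj _)).kronecker (hκ a)

lemma sotOutputState_add_sotOutputState_not {n : Type*} (p : Bool × Bool → ℝ)
    (κ : Bool × Bool → Matrix n n ℂ) (x : Bool × Bool) :
    sotOutputState p κ x + sotOutputState p κ (!x.1, !x.2) =
      ∑ a, p a • ((((1/2 : ℂ) • (1 : Matrix Bool Bool ℂ)) ⊗ₖ (1 : Matrix Bool Bool ℂ)) ⊗ₖ κ a) := by
  rw [sotOutputState, sotOutputState, ← Finset.sum_add_distrib]
  refine Finset.sum_congr rfl fun a _ => ?_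
  have hflip : xor (bif xor a.1 a.2 then !x.2 else !x.1) a.2 =
      !xor (bif xor a.1 a.2 then x.2 else x.1) a.2 := by
    cases xor a.1 a.2 <;> simp
  rw [← smul_add, ← add_kronecker, ← kronecker_add, hflip, proj_add_proj_not]

/-- No POVM can identify `(x₀,x₁)` from the ideal-protocol output states with
average success probability exceeding `1/2`. -/
theorem stmt_12 {m : ℕ}
    (p : Bool × Bool → ℝ) (hp : ∀ a, 0 ≤ p a) (hpsum : ∑ a : Bool × Bool, p a = 1)
    (κ : Bool × Bool → Matrix (Fin m) (Fin m) ℂ) (hκ : ∀ a, IsDensityMatrix (κ a))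
    (M : Bool × Bool → Matrix ((Bool × Bool) × Fin m) ((Bool × Bool) × Fin m) ℂ)
    (hM : ∀ x, (M x).PosSemidef) (hMsum : ∑ x : Bool × Bool, M x = 1) :
    (1/4 : ℝ) * ∑ x : Bool × Bool,
        ((M x * ∑ a : Bool × Bool, p a •
          ((((1/2 : ℂ) • (1 : Matrix Bool Bool ℂ)) ⊗ₖ
              proj (xor (bif xor a.1 a.2 then x.2 else x.1) a.2)) ⊗ₖ κ a)).trace).re ≤
      1/2 := by
  change (1/4 : ℝ) * ∑ x, (M x * sotOutputState p κ x).trace.re ≤ 1/2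
  have hρ := isDensityMatrix_sotOutputState hp hpsum hκ
  obtain ⟨σ, hσ⟩ : ∃ σ, ∀ x, sotOutputState p κ x + sotOutputState p κ (!x.1, !x.2) = σ :=
    ⟨_, sotOutputState_add_sotOutputState_not p κ⟩
  have hσρ : ∀ x, (σ - sotOutputState p κ x).PosSemidef := fun x => by
    rw [← hσ x, add_sub_cancel_left]
    exact (hρ _).1
  have hσtrace : σ.trace = 2 := by
    rw [← hσ (false, false), trace_add, (hρ _).2, (hρ _).2]
    norm_num
  calc (1/4 : ℝ) * ∑ x, (M x * sotOutputState p κ x).trace.re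
      ≤ 1/4 * σ.trace.re := by gcongr; exact sum_re_trace_mul_le_re_trace hM hMsum hσρ
    _ = 1/2 := by rw [hσtrace]; norm_num
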